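/- Let G be a finite connected (q+1)-regular graph with ν vertices, m edges, Grover matrix U, and Laplacian Δ = (q+1)I − A. Then det(I_{2m} − uU) = (1 − u²)^{m−ν} det((1 − 2u + u²) I_ν + (2u/(q+1)) Δ). -/

import Mathlib

open SimpleGraph Matrix

/-- The Grover matrix of a graph, indexed by darts (oriented arcs). -/
noncomputable def groverMatrix {V : Type*} [Fintype V] [DecidableEq V] (G : SimpleGraph V)
    [DecidableRel G.Adj] : Matrix G.Dart G.Dart ℝ :=
  fun e f =>
    if f = e.symm then 2 / (G.degree e.fst : ℝ) - 1
    else if f.snd = e.fst then 2 / (G.degree e.fst : ℝ)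
    else 0

namespace KS

variable {V : Type*} [Fintype V] [DecidableEq V] (G : SimpleGraph V) [DecidableRel G.Adj]

/-- start matrix -/
noncomputable def S : Matrix G.Dart V ℂ := Matrix.of fun d v => if d.fst = v then 1 else 0

/-- terminal matrix -/
noncomputable def T : Matrix G.Dart V ℂ := Matrix.of fun d v => if d.snd = v then 1 else 0

/-- flip matrix -/
noncomputable def J : Matrix G.Dart G.Dart ℂ := Matrix.of fun d e => if e = d.symm then 1 else 0

variable {G}

lemma J_mul_J : J G * J G = 1 := by
  ext d e
  simp only [J, Matrix.mul_apply, Matrix.of_apply, Matrix.one_apply]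
  rw [Finset.sum_eq_single d.symm]
  · rcases eq_or_ne d e with rfl | h
    · simp
    · simp [h, Ne.symm h]
  · intro b _ hb
    simp [hb]
  · simp

lemma J_mul_S : J G * S G = T G := by
  ext d v
  simp only [J, S, T, Matrix.mul_apply, Matrix.of_apply]
  rw [Finset.sum_eq_single d.symm]
  · simp
  · intro b _ hb; simp [hb]
  · simp

lemma T_mul_T (q : ℕ) (hreg : G.IsRegularOfDegree (q + 1)) :
    (T G)ᵀ * T G = (((q : ℂ) + 1)) • 1 := by
  ext v w
  simp only [T, Matrix.mul_apply, Matrix.transpose_apply, Matrix.of_apply, Matrix.smul_apply,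
    Matrix.one_apply]
  by_cases hvw : v = w
  · subst hvw
    simp only [if_pos rfl, smul_eq_mul, mul_one]
    have : ∀ d : G.Dart, (if d.snd = v then (1:ℂ) else 0) * (if d.snd = v then 1 else 0)
        = if d.snd = v then 1 else 0 := by intro d; by_cases h : d.snd = v <;> simp [h]
    rw [Finset.sum_congr rfl fun d _ => this d, Finset.sum_boole]
    have hcard : (Finset.univ.filter fun d : G.Dart => d.snd = v).card = G.degree v := by
      rw [← SimpleGraph.dart_fst_fiber_card_eq_degree G v]
      apply Finset.card_bij (fun d _ => d.symm)
      · intro a ha; simp at ha ⊢; exact ha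
      · intro a ha b hb hab
        simpa using congrArg SimpleGraph.Dart.symm hab
      · intro b hb; simp at hb ⊢; exact ⟨b.symm, by simp [hb]⟩
    rw [hcard, hreg v]
    push_cast; ring
  · simp only [if_neg hvw, smul_eq_mul, mul_zero]
    apply Finset.sum_eq_zero
    intro d _
    by_cases h : d.snd = v
    · have : ¬ d.snd = w := by rw [h]; exact hvw
      simp only [if_pos h, if_neg this, mul_zero]
    · simp [h]

lemma T_mul_S : (T G)ᵀ * S G = G.adjMatrix ℂ := by
  ext v w
  simp only [T, S, Matrix.mul_apply, Matrix.transpose_apply, Matrix.of_apply,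
    SimpleGraph.adjMatrix_apply]
  by_cases h : G.Adj v w
  · rw [Finset.sum_eq_single (SimpleGraph.Dart.mk (w, v) h.symm)]
    · simp [h]
    · intro b _ hb
      by_cases h1 : b.snd = v
      · by_cases h2 : b.fst = w
        · exfalso; apply hb; ext <;> simp [h1, h2]
        · simp [h2]
      · simp [h1]
    · simp
  · rw [if_neg h]
    apply Finset.sum_eq_zero
    intro d _
    by_cases h1 : d.snd = v
    · by_cases h2 : d.fst = w
      · exfalso; exact h (h1 ▸ h2 ▸ d.adj.symm)
      · simp [h2]
    · simp [h1]

end KS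

namespace KS
variable {V : Type*} [Fintype V] [DecidableEq V] {G : SimpleGraph V} [DecidableRel G.Adj]

/-- orientation predicate -/
def pos (d : G.Dart) : Prop := (Fintype.equivFin V) d.fst < (Fintype.equivFin V) d.snd

lemma pos_symm_iff (d : G.Dart) : pos d.symm ↔ ¬ pos d := by
  have hne : (Fintype.equivFin V) d.fst ≠ (Fintype.equivFin V) d.snd :=
    fun h => d.fst_ne_snd ((Fintype.equivFin V).injective h)
  show (Fintype.equivFin V) d.snd < (Fintype.equivFin V) d.fst ↔ _
  unfold pos
  constructor
  · intro h1 h2; exact absurd (h1.trans h2) (lt_irrefl _)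
  · intro h; exact hne.lt_or_gt.resolve_left h

noncomputable instance : DecidablePred (pos (G := G)) := fun d => by unfold pos; infer_instance

variable (G) in
/-- the type of positively oriented darts -/
abbrev Orient := {d : G.Dart // pos d}

/-- equivalence between two copies of the orientation and all darts -/
noncomputable def orientEquiv : Orient G ⊕ Orient G ≃ G.Dart :=
  Equiv.ofBijective (Sum.elim (·.1) (fun d => d.1.symm)) (by
    constructor
    · rintro (a | a) (b | b) h <;> simp only [Sum.elim_inl, Sum.elim_inr] at h
      · exact congrArg Sum.inl (Subtype.ext h)
      · have : pos ((b : G.Dart).symm) := h ▸ a.2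
        exact absurd b.2 ((pos_symm_iff (b : G.Dart)).mp this)
      · have : pos ((a : G.Dart).symm) := by rw [h]; exact b.2
        exact absurd a.2 ((pos_symm_iff (a : G.Dart)).mp this)
      · exact congrArg Sum.inr (Subtype.ext ((SimpleGraph.Dart.symm_involutive).injective h))
    · intro d
      by_cases h : pos d
      · exact ⟨Sum.inl ⟨d, h⟩, rfl⟩
      · exact ⟨Sum.inr ⟨d.symm, (pos_symm_iff d).mpr h⟩, by simp⟩)

lemma two_mul_card_orient : 2 * Fintype.card (Orient G) = Fintype.card G.Dart := by
  rw [← Fintype.card_congr (orientEquiv (G := G))]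
  simp [two_mul]

lemma orientEquiv_inl (a : Orient G) : orientEquiv (Sum.inl a) = a.1 := rfl

lemma orientEquiv_inr (a : Orient G) : orientEquiv (Sum.inr a) = a.1.symm := rfl

lemma det_one_add_smul_J (u : ℂ) :
    (1 + u • J G).det = (1 - u ^ 2) ^ (Fintype.card (Orient G)) := by
  rw [← Matrix.det_submatrix_equiv_self (orientEquiv (G := G))]
  have hsub : (1 + u • J G).submatrix (orientEquiv (G := G)) (orientEquiv (G := G)) =
      Matrix.fromBlocks 1 (u • 1) (u • 1) 1 := by
    ext i j
    have key : ∀ a b : Orient G, (b : G.Dart) ≠ (a : G.Dart).symm := by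
      intro a b h
      exact (pos_symm_iff (a : G.Dart)).mp (h ▸ b.2) a.2
    rcases i with a | a <;> rcases j with b | b <;>
      simp only [Matrix.submatrix_apply, orientEquiv_inl, orientEquiv_inr, Sum.elim_inl,
        Sum.elim_inr, Matrix.add_apply, Matrix.smul_apply, Matrix.one_apply, J, Matrix.of_apply,
        Matrix.fromBlocks_apply₁₁, Matrix.fromBlocks_apply₁₂, Matrix.fromBlocks_apply₂₁,
        Matrix.fromBlocks_apply₂₂, smul_eq_mul]
    · rw [if_neg (key a b), if_congr (Iff.symm Subtype.coe_inj) rfl rfl]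
      simp
    · have h1 : (a : G.Dart) ≠ (b : G.Dart).symm := key b a
      have h2 : (b : G.Dart).symm = (a : G.Dart).symm ↔ a = b := by
        rw [(SimpleGraph.Dart.symm_involutive).injective.eq_iff, Subtype.coe_inj, eq_comm]
      rw [if_neg h1, if_congr h2 rfl rfl]
      by_cases h : a = b <;> simp [h]
    · have h1 : (a : G.Dart).symm ≠ (b : G.Dart) := by
        intro hh; apply key a b; rw [← hh]
      have h2 : (b : G.Dart) = (a : G.Dart).symm.symm ↔ a = b := by
        rw [SimpleGraph.Dart.symm_symm, Subtype.coe_inj, eq_comm]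
      rw [if_neg h1, if_congr h2 rfl rfl]
      by_cases h : a = b <;> simp [h]
    · have h2 : (a : G.Dart).symm = (b : G.Dart).symm ↔ a = b := by
        rw [(SimpleGraph.Dart.symm_involutive).injective.eq_iff, Subtype.coe_inj]
      have h3 : (b : G.Dart).symm ≠ (a : G.Dart).symm.symm := by
        rw [SimpleGraph.Dart.symm_symm]
        intro hh; apply key b a; rw [← hh]
      rw [if_neg h3, if_congr h2 rfl rfl]
      simp
  rw [hsub, Matrix.det_fromBlocks_one₁₁]
  have : (1 : Matrix (Orient G) (Orient G) ℂ) - (u • 1) * (u • 1) = (1 - u ^ 2) • 1 := by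
    rw [Matrix.smul_mul, Matrix.mul_smul, Matrix.one_mul, smul_smul, sub_smul, one_smul, pow_two]
  rw [this, Matrix.det_smul, Matrix.det_one, mul_one]

end KS

namespace KS
variable {V : Type*} [Fintype V] [DecidableEq V] {G : SimpleGraph V} [DecidableRel G.Adj]

lemma grover_eq (q : ℕ) (hreg : G.IsRegularOfDegree (q + 1)) :
    (groverMatrix G).map (Complex.ofReal ·) =
      (2 / ((q : ℂ) + 1)) • (S G * (T G)ᵀ) - J G := by
  ext e f
  have hST : (S G * (T G)ᵀ) e f = if f.snd = e.fst then 1 else 0 := by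
    simp only [S, T, Matrix.mul_apply, Matrix.transpose_apply, Matrix.of_apply]
    rw [Finset.sum_eq_single e.fst]
    · simp
    · intro b _ hb; simp [Ne.symm hb]
    · simp
  simp only [Matrix.map_apply, Matrix.sub_apply, Matrix.smul_apply, J, Matrix.of_apply,
    groverMatrix, hST, smul_eq_mul, hreg e.fst]
  by_cases h1 : f = e.symm
  · have h2 : f.snd = e.fst := by rw [h1]; rfl
    rw [if_pos h1, if_pos h1, if_pos h2]
    push_cast
    ring
  · rw [if_neg h1, if_neg h1]
    by_cases h2 : f.snd = e.fst
    · rw [if_pos h2, if_pos h2]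
      push_cast
      ring
    · rw [if_neg h2, if_neg h2]
      simp

lemma key (q : ℕ) (hq : 1 ≤ q) (hreg : G.IsRegularOfDegree (q + 1))
    (ν m : ℕ) (hν : ν = Fintype.card V) (hm : m = G.edgeFinset.card)
    (u : ℂ) (hu : u ^ 2 ≠ 1) :
    (1 - u • (groverMatrix G).map (Complex.ofReal ·)).det =
      (1 - u ^ 2) ^ (m - ν) *
        ((1 - 2 * u + u ^ 2) • (1 : Matrix V V ℂ) +
          (2 * u / ((q : ℂ) + 1)) • (((q : ℂ) + 1) • (1 : Matrix V V ℂ) - G.adjMatrix ℂ)).det := by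
  have hq0 : ((q : ℂ) + 1) ≠ 0 := by
    have : ((q : ℂ) + 1) = ((q + 1 : ℕ) : ℂ) := by push_cast; ring
    rw [this]
    exact_mod_cast Nat.succ_ne_zero q
  have hu0 : (1 : ℂ) - u ^ 2 ≠ 0 := fun h => hu (by linear_combination -h)
  set c : ℂ := 2 / ((q : ℂ) + 1) with hc
  set w : ℂ := (1 - u ^ 2)⁻¹ with hw
  set A' := G.adjMatrix ℂ with hA'
  -- cardinalities
  have hDart : Fintype.card G.Dart = 2 * m := by
    rw [hm]; exact SimpleGraph.dart_card_eq_twice_card_edges G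
  have hOcard : Fintype.card (Orient G) = m := by
    have h2m := two_mul_card_orient (G := G)
    rw [hDart] at h2m
    omega
  have hsum : 2 * m = ν * (q + 1) := by
    rw [hm, ← SimpleGraph.sum_degrees_eq_twice_card_edges G, hν]
    rw [Finset.sum_congr rfl fun v _ => hreg v, Finset.sum_const, smul_eq_mul,
      Finset.card_univ]
  have hνm : ν ≤ m := by
    have h2 : ν * 2 ≤ ν * (q + 1) := Nat.mul_le_mul_left ν (by omega)
    omega
  -- matrix identities
  have hJT : J G * T G = S G := by
    rw [← J_mul_S (G := G), ← Matrix.mul_assoc, J_mul_J, Matrix.one_mul]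
  set B' : Matrix G.Dart V ℂ := (u * c * w) • (S G - u • T G) with hB'
  have h1 : (1 + u • J G) * (S G - u • T G) = (1 - u ^ 2) • S G := by
    rw [Matrix.add_mul, Matrix.one_mul, Matrix.smul_mul, Matrix.mul_sub, Matrix.mul_smul,
      J_mul_S, hJT]
    module
  have h2 : (1 + u • J G) * (B' * (T G)ᵀ) = (u * c) • (S G * (T G)ᵀ) := by
    rw [← Matrix.mul_assoc, hB', Matrix.mul_smul, h1, smul_smul]
    have : u * c * w * (1 - u ^ 2) = u * c := by
      rw [hw, mul_assoc, inv_mul_cancel₀ hu0, mul_one]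
    rw [this, Matrix.smul_mul]
  have hfac : 1 + u • J G - (u * c) • (S G * (T G)ᵀ) = (1 + u • J G) * (1 - B' * (T G)ᵀ) := by
    rw [Matrix.mul_sub, Matrix.mul_one, h2]
  -- LHS rewrite
  have hlhs : 1 - u • (groverMatrix G).map (Complex.ofReal ·) =
      1 + u • J G - (u * c) • (S G * (T G)ᵀ) := by
    rw [grover_eq q hreg, ← hc]
    module
  -- inner matrix
  have hTB : (T G)ᵀ * B' = (u * c * w) • (A' - (u * ((q : ℂ) + 1)) • 1) := by
    rw [hB', Matrix.mul_smul, Matrix.mul_sub, Matrix.mul_smul, T_mul_S, T_mul_T q hreg,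
      smul_smul, ← hA']
  have hinner : (1 : Matrix V V ℂ) - (u * c * w) • (A' - (u * ((q : ℂ) + 1)) • 1) =
      w • ((1 - 2 * u + u ^ 2) • (1 : Matrix V V ℂ) +
        (2 * u / ((q : ℂ) + 1)) • (((q : ℂ) + 1) • (1 : Matrix V V ℂ) - A')) := by
    match_scalars
    · rw [hc, hw]
      field_simp [hc, hw]
      ring
    · rw [hc, hw]
      field_simp [hc, hw]
  calc (1 - u • (groverMatrix G).map (Complex.ofReal ·)).det
      = ((1 + u • J G) * (1 - B' * (T G)ᵀ)).det := by rw [hlhs, hfac]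
    _ = (1 - u ^ 2) ^ m * (1 - (T G)ᵀ * B').det := by
        rw [Matrix.det_mul, det_one_add_smul_J, hOcard, Matrix.det_one_sub_mul_comm]
    _ = (1 - u ^ 2) ^ m * w ^ ν *
        ((1 - 2 * u + u ^ 2) • (1 : Matrix V V ℂ) +
          (2 * u / ((q : ℂ) + 1)) • (((q : ℂ) + 1) • (1 : Matrix V V ℂ) - A')).det := by
        rw [hTB, hinner, Matrix.det_smul, ← hν]; ring
    _ = (1 - u ^ 2) ^ (m - ν) *
        ((1 - 2 * u + u ^ 2) • (1 : Matrix V V ℂ) +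
          (2 * u / ((q : ℂ) + 1)) • (((q : ℂ) + 1) • (1 : Matrix V V ℂ) - A')).det := by
        rw [hw, inv_pow, ← pow_sub₀ _ hu0 hνm]

end KS


/-- Konno–Sato theorem, Eq. (3): for a connected `(q+1)`-regular graph `G` with `ν` vertices,
`m` edges, Grover matrix `U` and Laplacian `Δ = (q+1)I - A`,
`det(I - uU) = (1-u²)^{m-ν} det((1-2u+u²)I + (2u/(q+1)) Δ)`. -/
theorem stmt_5 {V : Type*} [Fintype V] [DecidableEq V] (G : SimpleGraph V)
    [DecidableRel G.Adj] (q : ℕ) (hq : 1 ≤ q) (hconn : G.Connected)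
    (hreg : G.IsRegularOfDegree (q + 1))
    (ν m : ℕ) (hν : ν = Fintype.card V) (hm : m = G.edgeFinset.card)
    (Δ : Matrix V V ℂ) (hΔ : Δ = ((q : ℂ) + 1) • (1 : Matrix V V ℂ) - G.adjMatrix ℂ) :
    ∀ u : ℂ,
      (1 - u • (groverMatrix G).map (Complex.ofReal ·)).det =
        (1 - u ^ 2) ^ (m - ν) *
          ((1 - 2 * u + u ^ 2) • (1 : Matrix V V ℂ) + (2 * u / ((q : ℂ) + 1)) • Δ).det := by
  subst hΔ
  suffices h : (fun u : ℂ => (1 - u • (groverMatrix G).map (Complex.ofReal ·)).det) =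
      (fun u : ℂ => (1 - u ^ 2) ^ (m - ν) *
        ((1 - 2 * u + u ^ 2) • (1 : Matrix V V ℂ) +
          (2 * u / ((q : ℂ) + 1)) • (((q : ℂ) + 1) • (1 : Matrix V V ℂ) - G.adjMatrix ℂ)).det) by
    intro u
    exact congrFun h u
  have hdense : Dense {u : ℂ | u ^ 2 = 1}ᶜ := by
    apply Set.Countable.dense_compl ℂ
    have hsub : {u : ℂ | u ^ 2 = 1} ⊆ {1, -1} := by
      intro u hu
      rw [Set.mem_setOf_eq, sq] at hu
      simpa using mul_self_eq_one_iff.mp hu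
    exact Set.Countable.mono hsub (Set.Finite.countable (Set.toFinite _))
  have hf : Continuous fun u : ℂ => (1 - u • (groverMatrix G).map (Complex.ofReal ·)).det :=
    (continuous_const.sub (continuous_id.smul continuous_const)).matrix_det
  have hg : Continuous fun u : ℂ => (1 - u ^ 2) ^ (m - ν) *
      ((1 - 2 * u + u ^ 2) • (1 : Matrix V V ℂ) +
        (2 * u / ((q : ℂ) + 1)) • (((q : ℂ) + 1) • (1 : Matrix V V ℂ) - G.adjMatrix ℂ)).det := by
    apply Continuous.mul
    · exact (continuous_const.sub (continuous_pow 2)).pow _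
    · apply Continuous.matrix_det
      apply Continuous.add
      · exact Continuous.smul
          (((continuous_const.sub (continuous_const.mul continuous_id)).add (continuous_pow 2)))
          continuous_const
      · exact Continuous.smul ((continuous_const.mul continuous_id).div_const _) continuous_const
  apply Continuous.ext_on hdense hf hg
  intro u hu
  exact KS.key q hq hreg ν m hν hm u hu
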